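/- arXiv:1510.00264 — 2 statements merged into one kernel-verified Lean document; each statement's English description precedes it below -/
import Mathlib

section
/- Let f₀, f₁ be n × n complex matrices, r = rank(f₁), and for t > 0 set f[t] = f₀ + t·f₁. Suppose f[t] is invertible for all t > 0 and define ρ(t) = ln|det f[t]|. Then for all t ≥ 1 we have ρ(t) ≤ r·ln t + n · max{0, ln(2‖f₀‖ + ‖f₁‖)}. -/
/-!
Choose a unitary `U` such that the rows of `U⋆ f₁` vanish outside a set `s` of `rank f₁` indices
(an eigenbasis of `f₁ f₁⋆` does this). Dividing the rows of `U⋆ f[t]` indexed by `s` by `t` pulls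
the factor `t ^ rank f₁` out of the determinant and leaves `E = Λ U⋆ f₀ + U⋆ f₁` with `‖Λ‖ ≤ 1`,
so `‖E‖ ≤ ‖f₀‖ + ‖f₁‖`. Finally `|det E| ≤ ‖E‖ⁿ`, since every eigenvalue of `E` is bounded by its
operator norm.
-/

open scoped Matrix.Norms.L2Operator ComplexOrder Real
open Matrix

namespace Matrix
variable {n : Type*} [Fintype n] [DecidableEq n]

theorem norm_det_le_l2_opNorm_pow (A : Matrix n n ℂ) : ‖A.det‖ ≤ ‖A‖ ^ Fintype.card n := by
  cases isEmpty_or_nonempty n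
  · simp
  rw [det_eq_prod_roots_charpoly, ← A.charpoly_natDegree_eq_dim,
    ← IsAlgClosed.card_roots_eq_natDegree, ← normHom_apply, map_multiset_prod]
  refine Multiset.prod_map_le_pow_card (fun z _ => norm_nonneg z) fun z hz => ?_
  exact spectrum.norm_le_norm_of_mem <| mem_spectrum_of_isRoot_charpoly <|
    (Polynomial.mem_roots'.mp hz).2

theorem det_add_smul_eq_pow_mul_det {K : Type*} [Field K] (A B : Matrix n n K) (s : Finset n)
    (hB : ∀ i ∉ s, B i = 0) {t : K} (ht : t ≠ 0) :
    (A + t • B).det = t ^ s.card * (diagonal (fun i => if i ∈ s then t⁻¹ else 1) * A + B).det := by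
  have hfactor : A + t • B = diagonal (fun i => if i ∈ s then t else 1) *
      (diagonal (fun i => if i ∈ s then t⁻¹ else 1) * A + B) := by
    ext i j
    by_cases hi : i ∈ s
    · simp [hi, mul_add, ht]
    · simp [hi, hB i hi]
  rw [hfactor, det_mul, det_diagonal, Finset.prod_ite_mem, Finset.univ_inter, Finset.prod_const]

theorem exists_mem_unitaryGroup_star_mul_row_eq_zero {𝕜 : Type*} [RCLike 𝕜] (B : Matrix n n 𝕜) :
    ∃ U ∈ unitaryGroup n 𝕜, ∃ s : Finset n, s.card = B.rank ∧ ∀ i ∉ s, (star U * B) i = 0 := by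
  have hH := isHermitian_mul_conjTranspose_self B
  set U : Matrix n n 𝕜 := ↑hH.eigenvectorUnitary
  refine ⟨U, hH.eigenvectorUnitary.2, Finset.univ.filter (hH.eigenvalues · ≠ 0), ?_, fun i hi => ?_⟩
  · rw [← rank_self_mul_conjTranspose, hH.rank_eq_card_non_zero_eigs, Fintype.card_subtype]
  · have hUU : (star U)ᴴ = U := by rw [star_eq_conjTranspose, conjTranspose_conjTranspose]
    have hdiag : (star U * B) * (star U * B)ᴴ = diagonal (RCLike.ofReal ∘ hH.eigenvalues) := by
      rw [← hH.conjStarAlgAut_star_eigenvectorUnitary, Unitary.conjStarAlgAut_star_apply,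
        conjTranspose_mul, hUU]
      simp only [U, Matrix.mul_assoc]
    have hrow : (star U * B) i ⬝ᵥ star ((star U * B) i) = hH.eigenvalues i :=
      (congr_fun₂ hdiag i i).trans (diagonal_apply_eq _ i)
    simp only [Finset.mem_filter, Finset.mem_univ, true_and, not_not] at hi
    exact dotProduct_self_star_eq_zero.mp (by rw [hrow, hi, RCLike.ofReal_zero])

theorem norm_det_mem_unitaryGroup_mul {𝕜 : Type*} [RCLike 𝕜] {U : Matrix n n 𝕜}
    (hU : U ∈ unitaryGroup n 𝕜) (A : Matrix n n 𝕜) : ‖(U * A).det‖ = ‖A.det‖ := by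
  have hdet : ‖U.det‖ = 1 := CStarRing.norm_of_mem_unitary (det_of_mem_unitary hU)
  rw [det_mul, norm_mul, hdet, one_mul]

theorem l2_opNorm_diagonal_mul_add_le {𝕜 : Type*} [RCLike 𝕜] {d : n → 𝕜} (hd : ∀ i, ‖d i‖ ≤ 1)
    (A B : Matrix n n 𝕜) : ‖diagonal d * A + B‖ ≤ ‖A‖ + ‖B‖ := by
  have hdiag : ‖diagonal d‖ ≤ 1 := by
    rw [l2_opNorm_diagonal]
    exact (pi_norm_le_iff_of_nonneg zero_le_one).mpr hd
  calc ‖diagonal d * A + B‖ ≤ ‖diagonal d‖ * ‖A‖ + ‖B‖ :=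
        norm_add_le_of_le (norm_mul_le _ _) le_rfl
    _ ≤ ‖A‖ + ‖B‖ := by gcongr; exact mul_le_of_le_one_left (norm_nonneg _) hdiag

end Matrix

theorem Real.log_le_mul_log_add_mul_posLog {a t c : ℝ} {r m : ℕ} (ha : 0 ≤ a) (ht : 1 ≤ t)
    (h : a ≤ t ^ r * c ^ m) : log a ≤ r * log t + m * log⁺ c :=
  -- going through `log⁺` also covers `a = 0`, where `log 0 = 0`
  calc log a ≤ log⁺ a := le_max_right _ _
    _ ≤ log⁺ (t ^ r * c ^ m) := posLog_le_posLog ha h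
    _ ≤ log⁺ (t ^ r) + log⁺ (c ^ m) := posLog_mul
    _ = r * log t + m * log⁺ c := by
      rw [posLog_pow, posLog_pow, posLog_eq_log (by rwa [abs_of_nonneg (by linarith)])]

theorem stmt6_general (n : ℕ) (f₀ f₁ : Matrix (Fin n) (Fin n) ℂ)
    (t : ℝ) (ht : 1 ≤ t) :
    Real.log ‖(f₀ + (t : ℂ) • f₁).det‖
      ≤ (f₁.rank : ℝ) * Real.log t + (n : ℝ) * max 0 (Real.log
          (2 * ‖Matrix.toEuclideanCLM (𝕜 := ℂ) f₀‖ +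
           ‖Matrix.toEuclideanCLM (𝕜 := ℂ) f₁‖)) := by
  rw [l2_opNorm_toEuclideanCLM, l2_opNorm_toEuclideanCLM, ← Real.posLog_apply]
  obtain ⟨U, hU, s, hs, hrow⟩ := f₁.exists_mem_unitaryGroup_star_mul_row_eq_zero
  have hUs : star U ∈ unitaryGroup (Fin n) ℂ := Unitary.star_mem hU
  have htC : (t : ℂ) ≠ 0 := by exact_mod_cast (zero_lt_one.trans_le ht).ne'
  set E := diagonal (fun i => if i ∈ s then (t : ℂ)⁻¹ else 1) * (star U * f₀) + star U * f₁
  have hdet : ‖(f₀ + (t : ℂ) • f₁).det‖ = t ^ f₁.rank * ‖E.det‖ := by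
    rw [← norm_det_mem_unitaryGroup_mul hUs, mul_add, Matrix.mul_smul,
      det_add_smul_eq_pow_mul_det _ _ s hrow htC, norm_mul, norm_pow, Complex.norm_real,
      Real.norm_of_nonneg (by linarith), hs]
  have hE : ‖E‖ ≤ 2 * ‖f₀‖ + ‖f₁‖ := by
    have hd : ∀ i, ‖if i ∈ s then (t : ℂ)⁻¹ else 1‖ ≤ 1 := fun i => by
      split_ifs
      · rw [norm_inv, Complex.norm_real, Real.norm_of_nonneg (by linarith)]
        exact inv_le_one_of_one_le₀ ht
      · exact norm_one.le
    calc ‖E‖ ≤ ‖star U * f₀‖ + ‖star U * f₁‖ := l2_opNorm_diagonal_mul_add_le hd _ _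
      _ = ‖f₀‖ + ‖f₁‖ := by
        rw [CStarRing.norm_mem_unitary_mul _ hUs, CStarRing.norm_mem_unitary_mul _ hUs]
      _ ≤ 2 * ‖f₀‖ + ‖f₁‖ := by linarith [norm_nonneg f₀]
  refine Real.log_le_mul_log_add_mul_posLog (norm_nonneg _) ht ?_
  rw [hdet]
  gcongr
  calc ‖E.det‖ ≤ ‖E‖ ^ Fintype.card (Fin n) := norm_det_le_l2_opNorm_pow E
    _ ≤ _ := by rw [Fintype.card_fin]; gcongr

/-- Large-time estimate: if `f[t] = f₀ + t·f₁` is invertible for all `t > 0`,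
`r = rank f₁` and `ρ(t) = ln|det f[t]|`, then for `t ≥ 1` we have
`ρ(t) ≤ r·ln t + n · max{0, ln(2‖f₀‖ + ‖f₁‖)}`. -/
theorem stmt6 (n : ℕ) (f₀ f₁ : Matrix (Fin n) (Fin n) ℂ)
    (hinv : ∀ t : ℝ, 0 < t → IsUnit (f₀ + (t : ℂ) • f₁))
    (t : ℝ) (ht : 1 ≤ t) :
    Real.log ‖(f₀ + (t : ℂ) • f₁).det‖
      ≤ (f₁.rank : ℝ) * Real.log t + (n : ℝ) * max 0 (Real.log
          (2 * ‖Matrix.toEuclideanCLM (𝕜 := ℂ) f₀‖ +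
           ‖Matrix.toEuclideanCLM (𝕜 := ℂ) f₁‖)) :=
  stmt6_general n f₀ f₁ t ht
end

section
/- Let c be a complex number. Then (1/2π) ∫₀^{2π} ln|e^{iθ} − c| dθ = ln(max{1, |c|}). -/
open Real Complex

/-- Jensen's formula: `(1/2π) ∫₀^{2π} ln|e^{iθ} − c| dθ = ln(max{1, |c|})`. -/
theorem stmt12 (c : ℂ) :
    (1 / (2 * Real.pi)) *
      ∫ θ in (0 : ℝ)..(2 * Real.pi),
        Real.log ‖Complex.exp (θ * Complex.I) - c‖
    = Real.log (max 1 ‖c‖) := by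
  have h := circleAverage_log_norm_sub_const_eq_posLog (a := c)
  rw [circleAverage_def, posLog_eq_log_max_one (norm_nonneg c)] at h
  simpa only [circleMap_zero, ofReal_one, one_mul, one_div, smul_eq_mul] using h
end
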